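/- Let Θ be a finite set with ⊤ ∉ Θ and let π be a path expression over Γ. There exists a CFM over P and the alphabet Σ × (Θ × (Θ ∪ {⊤})) whose language is exactly the set of extended MSCs (M, ξ), with ξ(e) = (ξ₁(e), ξ₂(e)) ∈ Θ × (Θ ∪ {⊤}), such that for all events e ∈ E, ξ₂(e) = ξ₁(first_π(e)), where ξ₁(⊤) := ⊤. -/

import Mathlib

namespace Gossip

/-- Events extended with bottom and top elements. -/
inductive ExtEv (E : Type) : Type where
  | bot : ExtEv E
  | evt (e : E) : ExtEv E
  | top : ExtEv E

/-- A message sequence chart (MSC) over processes `P`, alphabet `A`,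
with (finite, nonempty) set of events `E`. -/
structure MSC (P A E : Type) : Type where
  fintypeE : Fintype E
  nonemptyE : Nonempty E
  loc : E → P
  lab : E → A
  /-- process successor relation `→` -/
  next : E → E → Prop
  /-- message relation `◁` -/
  msg : E → E → Prop
  next_loc : ∀ {e f : E}, next e f → loc e = loc f
  next_irrefl : ∀ e : E, ¬ next e e
  next_right_unique : ∀ {e f f' : E}, next e f → next e f' → f = f'
  next_left_unique : ∀ {e e' f : E}, next e f → next e' f → e = e'
  next_total : ∀ e f : E, loc e = loc f →
      Relation.ReflTransGen next e f ∨ Relation.ReflTransGen next f e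
  msg_loc : ∀ {e f : E}, msg e f → loc e ≠ loc f
  /-- every event belongs to at most one pair of `◁` -/
  msg_unique : ∀ {e f e' f' : E}, msg e f → msg e' f' →
      (e = e' ∨ e = f' ∨ f = e' ∨ f = f') → e = e' ∧ f = f'
  fifo : ∀ {e f e' f' : E}, msg e f → msg e' f' → loc e = loc e' → loc f = loc f' →
      (Relation.ReflTransGen next e e' ↔ Relation.ReflTransGen next f f')
  /-- `≤ = (→ ∪ ◁)*` is a partial order -/
  causal_antisymm : ∀ {e f : E},
      Relation.ReflTransGen (fun x y => next x y ∨ msg x y) e f →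
      Relation.ReflTransGen (fun x y => next x y ∨ msg x y) f e → e = f

namespace MSC

variable {P A E B : Type}

/-- the causal order `≤ = (→ ∪ ◁)*` -/
def le (M : MSC P A E) : E → E → Prop :=
  Relation.ReflTransGen (fun x y => M.next x y ∨ M.msg x y)

/-- the strict causal order `<` -/
def lt (M : MSC P A E) (e f : E) : Prop := M.le e f ∧ e ≠ f

/-- `→*` -/
def nextStar (M : MSC P A E) : E → E → Prop := Relation.ReflTransGen M.next

/-- the causal order extended to `E ∪ {⊥,⊤}` with `⊥ < e < ⊤` -/
def extLe (M : MSC P A E) : ExtEv E → ExtEv E → Prop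
  | .bot, _ => True
  | _, .top => True
  | .evt e, .evt f => M.le e f
  | _, _ => False

def extLt (M : MSC P A E) (x y : ExtEv E) : Prop := M.extLe x y ∧ x ≠ y

/-- replace the labelling of an MSC (e.g. to pair it with an extra labelling) -/
def relabel (M : MSC P A E) (μ : E → B) : MSC P B E where
  fintypeE := M.fintypeE
  nonemptyE := M.nonemptyE
  loc := M.loc
  lab := μ
  next := M.next
  msg := M.msg
  next_loc := M.next_loc
  next_irrefl := M.next_irrefl
  next_right_unique := M.next_right_unique
  next_left_unique := M.next_left_unique
  next_total := M.next_total
  msg_loc := M.msg_loc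
  msg_unique := M.msg_unique
  fifo := M.fifo
  causal_antisymm := M.causal_antisymm

end MSC

/-- letters of path expressions: `→`, `→*`, `p▷q`, `⟨a⟩` -/
inductive PathLetter (P A : Type) : Type where
  | next : PathLetter P A
  | nextStar : PathLetter P A
  | msg (p q : P) : PathLetter P A
  | lab (a : A) : PathLetter P A

/-- path expressions: finite words over `Γ` -/
abbrev PathExpr (P A : Type) := List (PathLetter P A)

variable {P A E : Type}

def letterSem (M : MSC P A E) : PathLetter P A → E → E → Prop
  | .next => M.next
  | .nextStar => M.nextStar
  | .msg p q => fun e f => M.loc e = p ∧ M.loc f = q ∧ M.msg e f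
  | .lab a => fun e f => e = f ∧ M.lab e = a

/-- `⟦π⟧` -/
def pathSem (M : MSC P A E) : PathExpr P A → E → E → Prop
  | [] => fun e f => e = f
  | l :: π => fun e g => ∃ f, letterSem M l e f ∧ pathSem M π f g

def letterComp : PathLetter P A → P → P → Prop
  | .msg p q => fun x y => x = p ∧ y = q
  | _ => fun x y => x = y

/-- `Comp(π)`; `π ∈ Π_{p,q}` iff `pcomp π p q` -/
def pcomp : PathExpr P A → P → P → Prop
  | [] => fun x y => x = y
  | l :: π => fun x z => ∃ y, letterComp l x y ∧ pcomp π y z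

/-- `IsLast M π e x` holds iff `x = last_π(e)` (with `x = ⊥` iff no `π`-path into `e`). -/
def IsLast (M : MSC P A E) (π : PathExpr P A) (e : E) : ExtEv E → Prop
  | .bot => ∀ f, ¬ pathSem M π f e
  | .evt g => pathSem M π g e ∧ ∀ f, pathSem M π f e → M.le f g
  | .top => False

/-- `IsFirst M π e x` holds iff `x = first_π(e)` (with `x = ⊤` iff no `π`-path out of `e`). -/
def IsFirst (M : MSC P A E) (π : PathExpr P A) (e : E) : ExtEv E → Prop
  | .top => ∀ f, ¬ pathSem M π e f
  | .evt g => pathSem M π e g ∧ ∀ f, pathSem M π e f → M.le g f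
  | .bot => False

/-- `IsFa M π π' e x` holds iff `x = f_{π,π'}(e) = first_{π'}(last_π(e))`, with
`first_{π'}(⊥) := ⊥`. -/
def IsFa (M : MSC P A E) (π π' : PathExpr P A) (e : E) (x : ExtEv E) : Prop :=
  (IsLast M π e ExtEv.bot ∧ x = ExtEv.bot) ∨
    ∃ g, IsLast M π e (ExtEv.evt g) ∧ IsFirst M π' g x

/-- `IsLastProc M p e x` holds iff `x = last_p(e)`, the maximal event of process `p`
strictly below `e` (`⊥` if none). -/
def IsLastProc (M : MSC P A E) (p : P) (e : E) : ExtEv E → Prop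
  | .bot => ∀ f, M.loc f = p → ¬ M.lt f e
  | .evt g => M.loc g = p ∧ M.lt g e ∧ ∀ f, M.loc f = p → M.lt f e → M.le f g
  | .top => False

/-- `π ≼_e π'`, i.e. `last_π(e) ≤ last_{π'}(e)` -/
def ple (M : MSC P A E) (π π' : PathExpr P A) (e : E) : Prop :=
  ∃ x y, IsLast M π e x ∧ IsLast M π' e y ∧ M.extLe x y

def gossipSuffix : P → List P → PathExpr P A
  | _, [] => []
  | p, q :: w => PathLetter.msg p q :: PathLetter.nextStar :: gossipSuffix q w

/-- `π_w` for `w = p :: rest` -/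
def gossipExpr (p : P) (w : List P) : PathExpr P A :=
  match w with
  | [] => [PathLetter.next, PathLetter.nextStar]
  | _ :: _ => PathLetter.nextStar :: gossipSuffix p w

/-- `π ∈ Π^gossip` -/
def IsGossip (π : PathExpr P A) : Prop :=
  ∃ (p : P) (w : List P), (p :: w).Nodup ∧ π = gossipExpr p w

/-- actions of a CFM transition -/
inductive CAct (P A Msg : Type) : Type where
  | internal (a : A) : CAct P A Msg
  | send (a : A) (m : Msg) (q : P) : CAct P A Msg
  | recv (a : A) (m : Msg) (q : P) : CAct P A Msg

def CAct.labelOf {P A Msg : Type} : CAct P A Msg → A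
  | .internal a => a
  | .send a _ _ => a
  | .recv a _ _ => a

/-- a communicating finite-state machine over `P` and `A` -/
structure CFM (P A : Type) : Type 1 where
  Msg : Type
  msgFin : Fintype Msg
  S : Type
  sFin : Fintype S
  ι : P → S
  Δ : P → Set (S × CAct P A Msg × S)
  Acc : Set (P → S)
  wf_send : ∀ p s a m q s', (s, CAct.send a m q, s') ∈ Δ p → q ≠ p
  wf_recv : ∀ p s a m q s', (s, CAct.recv a m q, s') ∈ Δ p → q ≠ p

namespace CFM

variable {P A E : Type}

/-- `ρ` is a run of the CFM `C` on the MSC `M` -/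
def IsRun (C : CFM P A) (M : MSC P A E) (ρ : E → C.S × CAct P A C.Msg × C.S) : Prop :=
  (∀ e, ρ e ∈ C.Δ (M.loc e)) ∧
  (∀ e, ((ρ e).2.1).labelOf = M.lab e) ∧
  (∀ e, (¬ ∃ f, M.next f e) → (ρ e).1 = C.ι (M.loc e)) ∧
  (∀ e f, M.next e f → (ρ e).2.2 = (ρ f).1) ∧
  (∀ e, (¬ ∃ f, M.msg e f) → (¬ ∃ f, M.msg f e) → ∃ a, (ρ e).2.1 = CAct.internal a) ∧
  (∀ e f, M.msg e f → ∃ m, (ρ e).2.1 = CAct.send (M.lab e) m (M.loc f) ∧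
      (ρ f).2.1 = CAct.recv (M.lab f) m (M.loc e))

/-- the run `ρ` is accepting -/
def IsAccepting (C : CFM P A) (M : MSC P A E)
    (ρ : E → C.S × CAct P A C.Msg × C.S) : Prop :=
  ∃ s : P → C.S, s ∈ C.Acc ∧ ∀ p,
    ((∃ e, M.loc e = p) → ∃ e, M.loc e = p ∧ (¬ ∃ f, M.next e f) ∧ s p = (ρ e).2.2) ∧
    ((¬ ∃ e, M.loc e = p) → s p = C.ι p)

/-- `M ∈ L(C)` -/
def Accepts (C : CFM P A) (M : MSC P A E) : Prop :=
  ∃ ρ, C.IsRun M ρ ∧ C.IsAccepting M ρ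

/-- deterministic CFMs -/
def Deterministic (C : CFM P A) : Prop :=
  ∀ p s γ₁ s₁ γ₂ s₂, (s, γ₁, s₁) ∈ C.Δ p → (s, γ₂, s₂) ∈ C.Δ p →
    CAct.labelOf γ₁ = CAct.labelOf γ₂ →
    ((∀ a₁ a₂, γ₁ = CAct.internal a₁ → γ₂ = CAct.internal a₂ → s₁ = s₂) ∧
     (∀ a₁ m₁ a₂ m₂ q, γ₁ = CAct.send a₁ m₁ q → γ₂ = CAct.send a₂ m₂ q →
        s₁ = s₂ ∧ m₁ = m₂) ∧
     (∀ a₁ a₂ m q, γ₁ = CAct.recv a₁ m q → γ₂ = CAct.recv a₂ m q → s₁ = s₂))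

end CFM

/-- acceptance of the extended MSC `(M, ξ)` by a CFM over a product alphabet -/
def AcceptsExt {P A E Ξ : Type} (C : CFM P (A × Ξ)) (M : MSC P A E) (ξ : E → Ξ) : Prop :=
  C.Accepts (M.relabel fun e => (M.lab e, ξ e))

/-- apply `μ` to an extended event, sending both `⊥` and `⊤` to `none` -/
def extToOptMap {E Θ : Type} (μ : E → Θ) : ExtEv E → Option Θ
  | .evt g => some (μ g)
  | _ => none

/-- apply `μ` to an extended event, preserving `⊥` and `⊤` -/
def extMap {E Θ : Type} (μ : E → Θ) : ExtEv E → ExtEv Θ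
  | .bot => ExtEv.bot
  | .evt g => ExtEv.evt (μ g)
  | .top => ExtEv.top

/-- formulas of the temporal logic TL -/
inductive TL (P A : Type) : Type where
  | lab (a : A) : TL P A
  | proc (p : P) : TL P A
  | disj (φ ψ : TL P A) : TL P A
  | neg (φ : TL P A) : TL P A
  | co (φ : TL P A) : TL P A
  | tuntil (φ ψ : TL P A) : TL P A
  | tsince (φ ψ : TL P A) : TL P A

/-- `M, e ⊨ φ` -/
def TLsat (M : MSC P A E) : TL P A → E → Prop
  | .lab a, e => M.lab e = a
  | .proc p, e => M.loc e = p
  | .disj φ ψ, e => TLsat M φ e ∨ TLsat M ψ e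
  | .neg φ, e => ¬ TLsat M φ e
  | .co φ, e => ∃ f, ¬ M.le e f ∧ ¬ M.le f e ∧ TLsat M φ f
  | .tuntil φ ψ, e => ∃ f, M.lt e f ∧ TLsat M ψ f ∧ ∀ g, M.lt e g → M.lt g f → TLsat M φ g
  | .tsince φ ψ, e => ∃ f, M.lt f e ∧ TLsat M ψ f ∧ ∀ g, M.lt f g → M.lt g e → TLsat M φ g

end Gossip

/-!
The CFM guesses, at every event `e`, the vector whose `i`-th entry is `ξ₁(first_{πᵢ}(e))`,
where `πᵢ` is the suffix of `π` after its first `i` letters, and checks `ξ₂(e)` against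
entry `0`. Entry `i` is determined by entry `i + 1` at `e` and by the vectors of the
process successor of `e` and of the event receiving from `e`; a state announces the vector
of the next event and a message carries the vector of its receiver, so every process can
check this recurrence locally. For the letter `→*` the recurrence rests on monotonicity of
path targets along `→*`, which is where FIFO is used. Conversely any family of vectors
satisfying the recurrence is the true one, by induction downwards along the causal order.
-/

namespace Gossip

open Relation

variable {P A E Θ : Type}

open Classical in
noncomputable def succOpt {α : Type} (r : α → α → Prop) (a : α) : Option α :=
  if h : ∃ b, r a b then some h.choose else none

lemma succOpt_eq_some {α : Type} {r : α → α → Prop} {a b : α}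
    (hr : ∀ {b c}, r a b → r a c → b = c) : succOpt r a = some b ↔ r a b := by
  unfold succOpt
  split_ifs with h
  · exact ⟨fun hb => Option.some_injective _ hb ▸ h.choose_spec,
      fun hb => congrArg some (hr h.choose_spec hb)⟩
  · exact ⟨nofun, fun hb => h ⟨b, hb⟩⟩

lemma succOpt_eq_none {α : Type} {r : α → α → Prop} {a : α} :
    succOpt r a = none ↔ ¬∃ b, r a b := by
  unfold succOpt
  split_ifs with h <;> simp [h]

namespace MSC

variable (M : MSC P A E) {e f g : E}

lemma le_of_nextStar (h : ReflTransGen M.next e f) : M.le e f :=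
  ReflTransGen.mono (fun _ _ => Or.inl) _ _ h

lemma le_of_next (h : M.next e f) : M.le e f := ReflTransGen.single (Or.inl h)

lemma le_of_msg (h : M.msg e f) : M.le e f := ReflTransGen.single (Or.inr h)

lemma lt_of_next (h : M.next e f) : M.lt e f :=
  ⟨M.le_of_next h, by rintro rfl; exact M.next_irrefl e h⟩

lemma lt_of_msg (h : M.msg e f) : M.lt e f :=
  ⟨M.le_of_msg h, fun hef => M.msg_loc h (congrArg M.loc hef)⟩

lemma lt_of_lt_of_le (h : M.lt e f) (h' : M.le f g) : M.lt e g :=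
  ⟨ReflTransGen.trans h.1 h', by rintro rfl; exact h.2 (M.causal_antisymm h.1 h')⟩

lemma loc_eq_of_nextStar (h : ReflTransGen M.next e f) : M.loc e = M.loc f := by
  induction h with
  | refl => rfl
  | tail _ hstep ih => exact ih.trans (M.next_loc hstep)

lemma le_total_of_loc_eq (h : M.loc e = M.loc f) : M.le e f ∨ M.le f e :=
  (M.next_total e f h).imp M.le_of_nextStar M.le_of_nextStar

lemma msg_right_unique {f' : E} (h : M.msg e f) (h' : M.msg e f') : f = f' :=
  (M.msg_unique h h' (Or.inl rfl)).2

lemma msg_left_unique {e' : E} (h : M.msg e f) (h' : M.msg e' f) : e = e' :=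
  (M.msg_unique h h' (Or.inr (Or.inr (Or.inr rfl)))).1

lemma not_msg_of_msg (h : M.msg e f) : ¬M.msg f g := fun h' =>
  M.msg_loc h (congrArg M.loc (M.msg_unique h' h (Or.inr (Or.inl rfl))).1.symm)

lemma nextStar_of_next_of_next {e' f' : E} (h : ReflTransGen M.next e e')
    (hf : M.next e f) (hf' : M.next e' f') : ReflTransGen M.next f f' := by
  rcases h.cases_head with rfl | ⟨c, hc, hce'⟩
  · rw [M.next_right_unique hf hf']
  · exact M.next_right_unique hc hf ▸ hce'.tail hf'

lemma eq_of_not_next (hloc : M.loc e = M.loc f) (he : ¬∃ g, M.next e g)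
    (hf : ¬∃ g, M.next f g) : e = f := by
  rcases M.next_total e f hloc with h | h
  · exact h.cases_head.resolve_right fun ⟨c, hc, _⟩ => he ⟨c, hc⟩
  · exact (h.cases_head.resolve_right fun ⟨c, hc, _⟩ => hf ⟨c, hc⟩).symm

noncomputable def numAbove (e : E) : ℕ := {f | M.lt e f}.ncard

lemma numAbove_lt_numAbove (h : M.lt e f) : M.numAbove f < M.numAbove e := by
  have := M.fintypeE
  refine Set.ncard_lt_ncard ⟨fun g hg => M.lt_of_lt_of_le h hg.1, fun hsub => ?_⟩
  exact (hsub h : M.lt f f).2 rfl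

lemma exists_le_of_loc_eq {s : Set E} (hne : s.Nonempty)
    (hs : ∀ g ∈ s, ∀ g' ∈ s, M.loc g = M.loc g') : ∃ m ∈ s, ∀ g ∈ s, M.le m g := by
  have := M.fintypeE
  obtain ⟨m, hm, hmax⟩ := s.exists_max_image M.numAbove s.toFinite hne
  refine ⟨m, hm, fun g hg => (M.le_total_of_loc_eq (hs m hm g hg)).elim id fun hgm => ?_⟩
  by_cases hgm' : g = m
  · exact hgm' ▸ ReflTransGen.refl
  · exact absurd (hmax g hg) (M.numAbove_lt_numAbove ⟨hgm, hgm'⟩).not_ge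

lemma exists_not_next_of_loc {p : P} (hp : ∃ e, M.loc e = p) :
    ∃ e, M.loc e = p ∧ ¬∃ f, M.next e f := by
  have := M.fintypeE
  obtain ⟨m, hm, hmin⟩ := {e | M.loc e = p}.exists_min_image M.numAbove (Set.toFinite _) hp
  refine ⟨m, hm, fun ⟨f, hf⟩ => ?_⟩
  exact (hmin f ((M.next_loc hf).symm.trans hm)).not_gt (M.numAbove_lt_numAbove (M.lt_of_next hf))

end MSC

section Paths

variable (M : MSC P A E)

lemma pathSem_loc_eq : ∀ {τ : PathExpr P A} {e e' g g' : E}, M.loc e = M.loc e' →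
    pathSem M τ e g → pathSem M τ e' g' → M.loc g = M.loc g'
  | [], _, _, _, _, hloc, rfl, rfl => hloc
  | l :: _, _, _, _, _, hloc, ⟨f, hf, hg⟩, ⟨f', hf', hg'⟩ => by
    refine pathSem_loc_eq ?_ hg hg'
    cases l with
    | next => exact (M.next_loc hf).symm.trans (hloc.trans (M.next_loc hf'))
    | nextStar =>
      exact (M.loc_eq_of_nextStar hf).symm.trans (hloc.trans (M.loc_eq_of_nextStar hf'))
    | msg p q => exact hf.2.1.trans hf'.2.1.symm
    | lab a => exact hf.1 ▸ hf'.1 ▸ hloc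

lemma exists_pathSem_nextStar_of_nextStar : ∀ {τ : PathExpr P A} {e e' g₀ g' : E},
    ReflTransGen M.next e e' → pathSem M τ e g₀ → pathSem M τ e' g' →
      ∃ g, pathSem M τ e g ∧ ReflTransGen M.next g g'
  | [], _, _, _, _, hee', rfl, rfl => ⟨_, rfl, hee'⟩
  | l :: _, e, e', _, g', hee', ⟨f, hf, hg₀⟩, ⟨f', hf', hg'⟩ => by
    cases l with
    | next =>
      obtain ⟨g, hg, hgg'⟩ :=
        exists_pathSem_nextStar_of_nextStar (M.nextStar_of_next_of_next hee' hf hf') hg₀ hg'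
      exact ⟨g, ⟨f, hf, hg⟩, hgg'⟩
    | nextStar => exact ⟨g', ⟨f', hee'.trans hf', hg'⟩, ReflTransGen.refl⟩
    | msg p q =>
      have hff' : ReflTransGen M.next f f' :=
        (M.fifo hf.2.2 hf'.2.2 (hf.1.trans hf'.1.symm) (hf.2.1.trans hf'.2.1.symm)).1 hee'
      obtain ⟨g, hg, hgg'⟩ := exists_pathSem_nextStar_of_nextStar hff' hg₀ hg'
      exact ⟨g, ⟨f, hf, hg⟩, hgg'⟩
    | lab a =>
      obtain ⟨rfl, ha⟩ := hf
      obtain ⟨rfl, -⟩ := hf'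
      obtain ⟨g, hg, hgg'⟩ := exists_pathSem_nextStar_of_nextStar hee' hg₀ hg'
      exact ⟨g, ⟨e, ⟨rfl, ha⟩, hg⟩, hgg'⟩

end Paths

section First

variable {M : MSC P A E} {τ τ' : PathExpr P A} {e e' : E} {x y : ExtEv E}

lemma exists_isFirst (M : MSC P A E) (τ : PathExpr P A) (e : E) : ∃ x, IsFirst M τ e x := by
  by_cases h : ∃ g, pathSem M τ e g
  · obtain ⟨m, hm, hmin⟩ := M.exists_le_of_loc_eq (s := {g | pathSem M τ e g}) h
      fun g hg g' hg' => pathSem_loc_eq M rfl hg hg'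
    exact ⟨.evt m, hm, hmin⟩
  · exact ⟨.top, fun g hg => h ⟨g, hg⟩⟩

lemma IsFirst.unique (hx : IsFirst M τ e x) (hy : IsFirst M τ e y) : x = y := by
  cases x <;> cases y <;> simp only [IsFirst] at hx hy ⊢
  · exact congrArg _ (M.causal_antisymm (hx.2 _ hy.1) (hy.2 _ hx.1))
  · exact (hy _ hx.1).elim
  · exact (hx _ hy.1).elim

lemma IsFirst.congr (hτ : ∀ g, pathSem M τ e g ↔ pathSem M τ' e' g) (hx : IsFirst M τ e x) :
    IsFirst M τ' e' x := by
  cases x with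
  | bot => exact hx
  | evt g => exact ⟨(hτ g).1 hx.1, fun f hf => hx.2 f ((hτ f).2 hf)⟩
  | top => exact fun f hf => hx f ((hτ f).2 hf)

noncomputable def MSC.first (M : MSC P A E) (τ : PathExpr P A) (e : E) : ExtEv E :=
  (exists_isFirst M τ e).choose

lemma isFirst_first (M : MSC P A E) (τ : PathExpr P A) (e : E) : IsFirst M τ e (M.first τ e) :=
  (exists_isFirst M τ e).choose_spec

lemma IsFirst.eq_first (hx : IsFirst M τ e x) : x = M.first τ e :=
  hx.unique (isFirst_first M τ e)

lemma first_nextStar_cons (h : ∃ g, pathSem M τ e g) :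
    M.first (.nextStar :: τ) e = M.first τ e := by
  refine IsFirst.eq_first ?_ |>.symm
  obtain ⟨g₀, hg₀⟩ := h
  have hfirst := isFirst_first M τ e
  cases hm : M.first τ e with
  | bot => simp [hm, IsFirst] at hfirst
  | top => simp only [hm, IsFirst] at hfirst; exact absurd hg₀ (hfirst g₀)
  | evt m =>
    rw [hm] at hfirst
    refine ⟨⟨e, ReflTransGen.refl, hfirst.1⟩, fun g' ⟨e', hee', hg'⟩ => ?_⟩
    obtain ⟨g, hg, hgg'⟩ := exists_pathSem_nextStar_of_nextStar M hee' hg₀ hg'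
    exact ReflTransGen.trans (hfirst.2 g hg) (M.le_of_nextStar hgg')

variable {μ : E → Θ}

noncomputable def firstVal (M : MSC P A E) (μ : E → Θ) (τ : PathExpr P A) (e : E) :
    Option Θ :=
  extToOptMap μ (M.first τ e)

lemma IsFirst.firstVal_eq (hx : IsFirst M τ e x) : firstVal M μ τ e = extToOptMap μ x := by
  rw [firstVal, ← hx.eq_first]

lemma forall_isFirst_imp_iff {c : E → Option Θ} :
    (∀ e x, IsFirst M τ e x → c e = extToOptMap μ x) ↔ ∀ e, c e = firstVal M μ τ e :=
  ⟨fun h e => h e _ (isFirst_first M τ e), fun h e _ hx => (h e).trans hx.firstVal_eq⟩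

lemma firstVal_congr (hτ : ∀ g, pathSem M τ e g ↔ pathSem M τ' e' g) :
    firstVal M μ τ e = firstVal M μ τ' e' :=
  ((isFirst_first M τ' e').congr fun g => (hτ g).symm).firstVal_eq

lemma firstVal_eq_none (h : ∀ g, ¬pathSem M τ e g) : firstVal M μ τ e = none :=
  IsFirst.firstVal_eq (x := .top) h

lemma firstVal_eq_none_iff : firstVal M μ τ e = none ↔ ∀ g, ¬pathSem M τ e g := by
  refine ⟨fun h g hg => ?_, firstVal_eq_none⟩
  have hfirst := isFirst_first M τ e
  cases hm : M.first τ e with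
  | bot => simp [hm, IsFirst] at hfirst
  | evt m => simp [firstVal, hm, extToOptMap] at h
  | top => simp only [hm, IsFirst] at hfirst; exact hfirst g hg

lemma firstVal_nil (M : MSC P A E) (μ : E → Θ) (e : E) : firstVal M μ [] e = some (μ e) :=
  IsFirst.firstVal_eq (x := .evt e) ⟨rfl, fun _ hf => hf ▸ ReflTransGen.refl⟩

open Classical in
lemma firstVal_lab_cons (a : A) :
    firstVal M μ (.lab a :: τ) e = if M.lab e = a then firstVal M μ τ e else none := by
  split_ifs with ha
  · exact firstVal_congr fun g =>
      ⟨fun ⟨_, ⟨hef, _⟩, hg⟩ => hef ▸ hg, fun hg => ⟨e, ⟨rfl, ha⟩, hg⟩⟩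
  · exact firstVal_eq_none fun g ⟨_, ⟨_, ha'⟩, _⟩ => ha ha'

lemma firstVal_next_cons :
    firstVal M μ (.next :: τ) e = (succOpt M.next e).bind (firstVal M μ τ) := by
  cases h : succOpt M.next e with
  | none => exact firstVal_eq_none fun g ⟨f, hf, _⟩ => succOpt_eq_none.1 h ⟨f, hf⟩
  | some f =>
    have hf := (succOpt_eq_some M.next_right_unique).1 h
    exact firstVal_congr fun g =>
      ⟨fun ⟨f', hf', hg⟩ => M.next_right_unique hf' hf ▸ hg, fun hg => ⟨f, hf, hg⟩⟩

open Classical in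
lemma firstVal_msg_cons (p q : P) :
    firstVal M μ (.msg p q :: τ) e = (succOpt M.msg e).bind fun f =>
      if M.loc e = p ∧ M.loc f = q then firstVal M μ τ f else none := by
  cases h : succOpt M.msg e with
  | none => exact firstVal_eq_none fun g ⟨f, hf, _⟩ => succOpt_eq_none.1 h ⟨f, hf.2.2⟩
  | some f =>
    have hf := (succOpt_eq_some M.msg_right_unique).1 h
    dsimp only [Option.bind_some]
    split_ifs with hpq
    · exact firstVal_congr fun g =>
        ⟨fun ⟨f', hf', hg⟩ => M.msg_right_unique hf'.2.2 hf ▸ hg,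
          fun hg => ⟨f, ⟨hpq.1, hpq.2, hf⟩, hg⟩⟩
    · exact firstVal_eq_none fun g ⟨f', hf', _⟩ =>
        hpq ⟨hf'.1, M.msg_right_unique hf'.2.2 hf ▸ hf'.2.1⟩

lemma pathSem_nextStar_cons_iff (h : ∀ g, ¬pathSem M τ e g) {g : E} :
    pathSem M (.nextStar :: τ) e g ↔ ∃ f, M.next e f ∧ pathSem M (.nextStar :: τ) f g := by
  constructor
  · rintro ⟨e', hee', hg⟩
    rcases hee'.cases_head with rfl | ⟨f, hf, hfe'⟩
    · exact absurd hg (h g)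
    · exact ⟨f, hf, e', hfe', hg⟩
  · rintro ⟨f, hf, e', hfe', hg⟩
    exact ⟨e', ReflTransGen.head hf hfe', hg⟩

lemma firstVal_nextStar_cons :
    firstVal M μ (.nextStar :: τ) e =
      (firstVal M μ τ e).or ((succOpt M.next e).bind (firstVal M μ (.nextStar :: τ))) := by
  by_cases hτ : firstVal M μ τ e = none
  · have hno := firstVal_eq_none_iff.1 hτ
    rw [hτ, Option.none_or]
    cases h : succOpt M.next e with
    | none =>
      exact firstVal_eq_none fun g hg =>
        have ⟨f, hf, _⟩ := (pathSem_nextStar_cons_iff hno).1 hg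
        succOpt_eq_none.1 h ⟨f, hf⟩
    | some f =>
      have hf := (succOpt_eq_some M.next_right_unique).1 h
      exact firstVal_congr fun g => (pathSem_nextStar_cons_iff hno).trans
        ⟨fun ⟨f', hf', hg⟩ => M.next_right_unique hf' hf ▸ hg, fun hg => ⟨f, hf, hg⟩⟩
  · obtain ⟨v, hv⟩ := Option.ne_none_iff_exists'.1 hτ
    have hpath : ∃ g, pathSem M τ e g := not_forall_not.1 (mt firstVal_eq_none_iff.2 hτ)
    rw [hv, Option.some_or, ← hv, firstVal, firstVal, first_nextStar_cons hpath]

end First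

/-- Entry `i` of a value vector stands for `ξ₁(first_{π.drop i}(·))`; `next` and `send` hold
the vectors of the process successor and of the receiver of the event. -/
structure LocalView (P A Θ : Type) (n : ℕ) : Type where
  loc : P
  lab : A
  next : Option (Fin (n + 1) → Option Θ)
  send : Option (P × (Fin (n + 1) → Option Θ))

namespace LocalView

variable {n : ℕ}

open Classical in
/-- Entry `i` of the own value vector, computed from entry `i + 1` (which is `x`) and the
view, when letter `i` of `π` is the given one. -/
noncomputable def step (v : LocalView P A Θ n) (x : Option Θ) (i : Fin n) :
    PathLetter P A → Option Θ
  | .lab a => if v.lab = a then x else none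
  | .next => v.next.bind (· i.succ)
  | .nextStar => x.or (v.next.bind (· i.castSucc))
  | .msg p q => v.send.bind fun r => if v.loc = p ∧ r.1 = q then r.2 i.succ else none

def Consistent (π : PathExpr P A) (v : LocalView P A Θ π.length) (θ : Θ)
    (V : Fin (π.length + 1) → Option Θ) : Prop :=
  V (Fin.last _) = some θ ∧ ∀ i : Fin π.length, V i.castSucc = v.step (V i.succ) i π[i]

end LocalView

noncomputable def MSC.view (M : MSC P A E) {n : ℕ} (W : E → Fin (n + 1) → Option Θ) (e : E) :
    LocalView P A Θ n where
  loc := M.loc e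
  lab := M.lab e
  next := (succOpt M.next e).map W
  send := (succOpt M.msg e).map fun f => (M.loc f, W f)

def IsLocallyConsistent (M : MSC P A E) (μ : E → Θ) (π : PathExpr P A)
    (W : E → Fin (π.length + 1) → Option Θ) : Prop :=
  ∀ e, (M.view W e).Consistent π (μ e) (W e)

noncomputable def firstVals (M : MSC P A E) (μ : E → Θ) (π : PathExpr P A) (e : E)
    (i : Fin (π.length + 1)) : Option Θ :=
  firstVal M μ (π.drop i) e

section Recurrence

variable {M : MSC P A E} {μ : E → Θ} {π : PathExpr P A}

lemma isLocallyConsistent_firstVals : IsLocallyConsistent M μ π (firstVals M μ π) := by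
  intro e
  refine ⟨by simp [firstVals, firstVal_nil], fun i => ?_⟩
  have hdrop : π.drop i = π[i] :: π.drop (i + 1) := List.drop_eq_getElem_cons i.isLt
  generalize π[i] = l at hdrop ⊢
  simp only [firstVals, Fin.val_castSucc, Fin.val_succ, hdrop]
  cases l with
  | lab a => rw [firstVal_lab_cons]; rfl
  | next => rw [firstVal_next_cons]; simp only [MSC.view, LocalView.step, Option.bind_map]; rfl
  | nextStar =>
    rw [firstVal_nextStar_cons]
    simp only [MSC.view, LocalView.step, Option.bind_map, Function.comp_def, firstVals,
      Fin.val_castSucc, hdrop]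
  | msg p q => rw [firstVal_msg_cons]; simp only [MSC.view, LocalView.step, Option.bind_map]; rfl

lemma IsLocallyConsistent.unique {W W' : E → Fin (π.length + 1) → Option Θ}
    (hW : IsLocallyConsistent M μ π W) (hW' : IsLocallyConsistent M μ π W') : W = W' := by
  funext e
  induction hN : M.numAbove e using Nat.strong_induction_on generalizing e with
  | _ N ih =>
  have above {f : E} (hf : M.lt e f) : W f = W' f := ih _ (hN ▸ M.numAbove_lt_numAbove hf) f rfl
  have hview : M.view W e = M.view W' e := by
    simp only [MSC.view, LocalView.mk.injEq, true_and]
    exact ⟨Option.map_congr fun f hf =>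
        above (M.lt_of_next ((succOpt_eq_some M.next_right_unique).1 hf)),
      Option.map_congr fun f hf => by
        rw [above (M.lt_of_msg ((succOpt_eq_some M.msg_right_unique).1 hf))]⟩
  funext i
  induction i using Fin.reverseInduction with
  | last => rw [(hW e).1, (hW' e).1]
  | cast i ih' => rw [(hW e).2 i, (hW' e).2 i, ih', hview]

lemma IsLocallyConsistent.eq_firstVals {W : E → Fin (π.length + 1) → Option Θ}
    (hW : IsLocallyConsistent M μ π W) : W = firstVals M μ π :=
  hW.unique isLocallyConsistent_firstVals

end Recurrence

namespace CAct

variable {B Msg : Type}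

def peer : CAct P B Msg → Option P
  | .internal _ => none
  | .send _ _ q => some q
  | .recv _ _ q => some q

def sendData : CAct P B Msg → Option (P × Msg)
  | .send _ m q => some (q, m)
  | _ => none

end CAct

namespace MSC

variable {B Msg : Type} (M : MSC P B E) (W : E → Msg) {e f : E}

noncomputable def act (e : E) : CAct P B Msg :=
  match succOpt M.msg e, succOpt (flip M.msg) e with
  | some f, _ => .send (M.lab e) (W f) (M.loc f)
  | none, some f => .recv (M.lab e) (W e) (M.loc f)
  | none, none => .internal (M.lab e)

lemma act_of_msg (h : M.msg e f) : M.act W e = .send (M.lab e) (W f) (M.loc f) := by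
  rw [act, (succOpt_eq_some M.msg_right_unique).2 h]

lemma act_of_msg_to (h : M.msg f e) : M.act W e = .recv (M.lab e) (W e) (M.loc f) := by
  rw [act, succOpt_eq_none.2 fun ⟨_, h'⟩ => M.not_msg_of_msg h h',
    (succOpt_eq_some (r := flip M.msg) fun h₁ h₂ => M.msg_left_unique h₁ h₂).2 h]

lemma act_of_not_msg (hs : ¬∃ f, M.msg e f) (hr : ¬∃ f, M.msg f e) :
    M.act W e = .internal (M.lab e) := by
  rw [act, succOpt_eq_none.2 hs, succOpt_eq_none.2 hr]

lemma act_labelOf : (M.act W e).labelOf = M.lab e := by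
  unfold act; split <;> rfl

lemma act_sendData :
    (M.act W e).sendData = (succOpt M.msg e).map fun f => (M.loc f, W f) := by
  by_cases hs : ∃ f, M.msg e f
  · obtain ⟨f, hf⟩ := hs
    rw [M.act_of_msg W hf, (succOpt_eq_some M.msg_right_unique).2 hf]; rfl
  · rw [succOpt_eq_none.2 hs]
    by_cases hr : ∃ f, M.msg f e
    · obtain ⟨f, hf⟩ := hr
      rw [M.act_of_msg_to W hf]; rfl
    · rw [M.act_of_not_msg W hs hr]; rfl

lemma act_peer_ne : (M.act W e).peer ≠ some (M.loc e) := by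
  by_cases hs : ∃ f, M.msg e f
  · obtain ⟨f, hf⟩ := hs
    rw [M.act_of_msg W hf]
    exact fun h => M.msg_loc hf (Option.some_injective _ h).symm
  by_cases hr : ∃ f, M.msg f e
  · obtain ⟨f, hf⟩ := hr
    rw [M.act_of_msg_to W hf]
    exact fun h => M.msg_loc hf (Option.some_injective _ h)
  · rw [M.act_of_not_msg W hs hr]
    exact nofun

lemma eq_of_act_eq_recv {b : B} {m : Msg} {q : P} (h : M.act W e = .recv b m q) : m = W e := by
  unfold act at h
  split at h <;> cases h; rfl

end MSC

/-- `none`: no event of the process has been read; `some none`: the process has ended;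
`some (some V)`: the next event of the process has to guess the value vector `V`. -/
abbrev GuessState (Θ : Type) (n : ℕ) : Type := Option (Option (Fin (n + 1) → Option Θ))

structure IsGuessStep (π : PathExpr P A) (p : P) (V : Fin (π.length + 1) → Option Θ)
    (s : GuessState Θ π.length)
    (γ : CAct P (A × Θ × Option Θ) (Fin (π.length + 1) → Option Θ))
    (s' : GuessState Θ π.length) : Prop where
  source : s = none ∨ s = some (some V)
  target : s' ≠ none
  peer_ne : γ.peer ≠ some p
  eq_of_eq_recv : ∀ a m q, γ = .recv a m q → m = V
  output : γ.labelOf.2.2 = V 0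
  consistent : (LocalView.mk p γ.labelOf.1 s'.join γ.sendData).Consistent π γ.labelOf.2.1 V

def firstCFM (P A Θ : Type) [Fintype Θ] (π : PathExpr P A) : CFM P (A × Θ × Option Θ) where
  Msg := Fin (π.length + 1) → Option Θ
  msgFin := inferInstance
  S := GuessState Θ π.length
  sFin := inferInstance
  ι _ := none
  Δ p := {t | ∃ V, IsGuessStep π p V t.1 t.2.1 t.2.2}
  Acc := {s | ∀ p, (s p).join = none}
  wf_send _ _ _ _ _ _ := fun ⟨_, h⟩ hq => h.peer_ne (congrArg some hq)
  wf_recv _ _ _ _ _ _ := fun ⟨_, h⟩ hq => h.peer_ne (congrArg some hq)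

section Correctness

variable [Fintype Θ] {M : MSC P A E} {π : PathExpr P A} {ξ : E → Θ × Option Θ}

theorem firstCFM_sound (h : AcceptsExt (firstCFM P A Θ π) M ξ) (e : E) :
    (ξ e).2 = firstVal M (fun g => (ξ g).1) π e := by
  obtain ⟨ρ, ⟨hΔ, hlab, -, hnext, hint, hmsg⟩, s, hAcc, hs⟩ := h
  choose V hV using hΔ
  have target_join (e : E) : (ρ e).2.2.join = (succOpt M.next e).map V := by
    cases hf : succOpt M.next e with
    | some f =>
      have hsrc : (ρ e).2.2 = (ρ f).1 := hnext e f ((succOpt_eq_some M.next_right_unique).1 hf)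
      rcases (hV f).source with h | h
      · exact absurd (hsrc.trans h) (hV e).target
      · rw [hsrc, h]; rfl
    | none =>
      obtain ⟨e', he', hmax', hse'⟩ := (hs (M.loc e)).1 ⟨e, rfl⟩
      rw [M.eq_of_not_next he' hmax' (succOpt_eq_none.1 hf)] at hse'
      rw [← hse']
      exact hAcc _
  have send_data (e : E) :
      (ρ e).2.1.sendData = (succOpt M.msg e).map fun f => (M.loc f, V f) := by
    cases hf : succOpt M.msg e with
    | some f =>
      obtain ⟨m, hsend, hrecv⟩ := hmsg e f ((succOpt_eq_some M.msg_right_unique).1 hf)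
      rw [hsend, (hV f).eq_of_eq_recv _ _ _ hrecv]; rfl
    | none =>
      by_cases hr : ∃ f, M.msg f e
      · obtain ⟨f, hfe⟩ := hr
        obtain ⟨m, -, hrecv⟩ := hmsg f e hfe
        rw [hrecv]; rfl
      · obtain ⟨a, ha⟩ := hint e (succOpt_eq_none.1 hf) hr
        rw [ha]; rfl
  have hcons : IsLocallyConsistent M (fun g => (ξ g).1) π V := fun e => by
    have hview : M.view V e =
        ⟨M.loc e, (ρ e).2.1.labelOf.1, (ρ e).2.2.join, (ρ e).2.1.sendData⟩ := by
      rw [target_join, send_data, hlab]; rfl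
    have hθ : (ξ e).1 = (ρ e).2.1.labelOf.2.1 := by rw [hlab]; rfl
    change (M.view V e).Consistent π (ξ e).1 (V e)
    rw [hview, hθ]
    exact (hV e).consistent
  calc (ξ e).2 = (ρ e).2.1.labelOf.2.2 := by rw [hlab]; rfl
    _ = V e 0 := (hV e).output
    _ = firstVal M (fun g => (ξ g).1) π e := by rw [hcons.eq_firstVals]; rfl

open Classical in
theorem firstCFM_complete (h : ∀ e, (ξ e).2 = firstVal M (fun g => (ξ g).1) π e) :
    AcceptsExt (firstCFM P A Θ π) M ξ := by
  set M' := M.relabel fun e => (M.lab e, ξ e)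
  set W := firstVals M (fun g => (ξ g).1) π
  let src (e : E) : GuessState Θ π.length := if ∃ f, M.next f e then some (some (W e)) else none
  let tgt (e : E) : GuessState Θ π.length := some ((succOpt M.next e).map W)
  have step (e : E) : IsGuessStep π (M.loc e) (W e) (src e) (M'.act W e) (tgt e) := by
    refine ⟨by unfold src; split_ifs <;> simp, Option.some_ne_none _, M'.act_peer_ne W,
      fun _ _ _ => M'.eq_of_act_eq_recv W, ?_, ?_⟩
    · rw [M'.act_labelOf]; exact h e
    · rw [M'.act_labelOf, M'.act_sendData]
      exact isLocallyConsistent_firstVals e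
  let final (p : P) : GuessState Θ π.length := if ∃ e, M.loc e = p then some none else none
  refine ⟨fun e => (src e, M'.act W e, tgt e),
    ⟨fun e => ⟨W e, step e⟩, fun e => M'.act_labelOf W, fun e he => if_neg he, ?_,
      fun e hs hr => ⟨_, M'.act_of_not_msg W hs hr⟩,
      fun e f hef => ⟨W f, M'.act_of_msg W hef, M'.act_of_msg_to W hef⟩⟩,
    final, fun p => by unfold final; split <;> rfl,
    fun p => ⟨fun hp => ?_, fun hp => if_neg hp⟩⟩
  · intro e f hef
    have hprev : ∃ g, M.next g f := ⟨e, hef⟩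
    simp only [src, tgt, if_pos hprev, (succOpt_eq_some M.next_right_unique).2 hef]
    rfl
  · have hp : ∃ e, M.loc e = p := hp
    obtain ⟨e, he, hmax⟩ := M.exists_not_next_of_loc hp
    refine ⟨e, he, hmax, ?_⟩
    simp only [final, if_pos hp, tgt, succOpt_eq_none.2 hmax]
    rfl

end Correctness

end Gossip

open Gossip in
theorem stmt13_general {P A : Type} (Θ : Type) [Fintype Θ]
    (π : PathExpr P A) :
    ∃ C : CFM P (A × (Θ × Option Θ)),
      ∀ (E : Type) (M : MSC P A E) (ξ : E → Θ × Option Θ),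
        AcceptsExt C M ξ ↔
          ∀ (e : E) (x : ExtEv E), IsFirst M π e x →
            (ξ e).2 = extToOptMap (fun g => (ξ g).1) x := by
  refine ⟨firstCFM P A Θ π, fun E M ξ => ?_⟩
  rw [forall_isFirst_imp_iff]
  exact ⟨firstCFM_sound, firstCFM_complete⟩

open Gossip in
/-- Lemma 5: there is a CFM recognizing exactly the extended MSCs
`(M, ξ)` with `ξ(e) = (ξ₁(e), ξ₂(e))` such that `ξ₂(e) = ξ₁(first_π(e))` for all `e`
(with `ξ₁(⊤) = ⊤`). -/
theorem stmt13 {P A : Type} [Fintype P] [Fintype A] (Θ : Type) [Fintype Θ]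
    (π : PathExpr P A) :
    ∃ C : CFM P (A × (Θ × Option Θ)),
      ∀ (E : Type) (M : MSC P A E) (ξ : E → Θ × Option Θ),
        AcceptsExt C M ξ ↔
          ∀ (e : E) (x : ExtEv E), IsFirst M π e x →
            (ξ e).2 = extToOptMap (fun g => (ξ g).1) x :=
  stmt13_general Θ π
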